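/- Let X be a finite topological space. The set Cov(X) of basis-like open covers of X, ordered by the relation U ≥_C V (meaning: U refines V and there exists an order-preserving map p : U → V, with respect to set inclusion, such that U ⊆ p(U) for every U ∈ U), is a directed set: the relation is reflexive and transitive, and any two elements have a common upper bound; in fact B(X) ≥_C U for every U ∈ Cov(X). -/

import Mathlib

/-- `minNhd x` is the intersection of all open sets containing `x`. -/
def minNhd {X : Type*} [TopologicalSpace X] (x : X) : Set X :=
  ⋂₀ {U : Set X | IsOpen U ∧ x ∈ U}

/-- `𝒰` is a basis-like (finite) open cover: a finite open cover such that whenever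
`x ∈ u ∩ v` with `u, v ∈ 𝒰` there is `w ∈ 𝒰` with `x ∈ w ⊆ u ∩ v`. -/
def IsBasisLikeCover {X : Type*} [TopologicalSpace X] (𝒰 : Set (Set X)) : Prop :=
  𝒰.Finite ∧ (∀ u ∈ 𝒰, IsOpen u) ∧ ⋃₀ 𝒰 = Set.univ ∧
    ∀ u ∈ 𝒰, ∀ v ∈ 𝒰, ∀ x ∈ u ∩ v, ∃ w ∈ 𝒰, x ∈ w ∧ w ⊆ u ∩ v

/-- `𝒰 ≥_C 𝒱`: `𝒰` refines `𝒱` and there is an order-preserving map `p : 𝒰 → 𝒱`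
(for set inclusion) with `u ⊆ p u` for every `u ∈ 𝒰`. -/
def GeC {X : Type*} (𝒰 𝒱 : Set (Set X)) : Prop :=
  (∀ u ∈ 𝒰, ∃ v ∈ 𝒱, u ⊆ v) ∧
    ∃ p : Set X → Set X,
      (∀ u ∈ 𝒰, p u ∈ 𝒱 ∧ u ⊆ p u) ∧
      ∀ u ∈ 𝒰, ∀ u' ∈ 𝒰, u ⊆ u' → p u ⊆ p u'

/-!
A basis-like cover `𝒰` has, for every point `x`, a least member containing `x`: take a minimal
one `w`; for any other `u ∋ x`, basis-likeness gives `x ∈ w' ⊆ u ∩ w`, and minimality forces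
`w ⊆ w' ⊆ u`. Since a member of `𝒰` is open, it contains `U_x` iff it contains `x`, so
sending `U_x` to the intersection of the members of `𝒰` containing it is a monotone map
`B(X) → 𝒰` witnessing `B(X) ≥_C 𝒰`. Hence `B(X)` is a common upper bound of any two covers.
-/

lemma geC_of_map {X : Type*} {𝒰 𝒱 : Set (Set X)} (p : Set X → Set X)
    (hp : ∀ u ∈ 𝒰, p u ∈ 𝒱 ∧ u ⊆ p u) (hmono : ∀ u ∈ 𝒰, ∀ u' ∈ 𝒰, u ⊆ u' → p u ⊆ p u') :
    GeC 𝒰 𝒱 :=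
  ⟨fun u hu => ⟨p u, hp u hu⟩, p, hp, hmono⟩

lemma GeC.refl {X : Type*} (𝒰 : Set (Set X)) : GeC 𝒰 𝒰 :=
  geC_of_map id (fun _ hu => ⟨hu, subset_rfl⟩) fun _ _ _ _ h => h

lemma GeC.trans {X : Type*} {𝒰 𝒱 𝒲 : Set (Set X)} (h₁ : GeC 𝒰 𝒱) (h₂ : GeC 𝒱 𝒲) :
    GeC 𝒰 𝒲 := by
  obtain ⟨-, p, hp, hpmono⟩ := h₁
  obtain ⟨-, q, hq, hqmono⟩ := h₂
  refine geC_of_map (q ∘ p) (fun u hu => ?_) fun u hu u' hu' huu' => ?_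
  · exact ⟨(hq _ (hp u hu).1).1, (hp u hu).2.trans (hq _ (hp u hu).1).2⟩
  · exact hqmono _ (hp u hu).1 _ (hp u' hu').1 (hpmono u hu u' hu' huu')

lemma geC_of_forall_exists_isLeast {X : Type*} {𝒰 𝒱 : Set (Set X)}
    (h : ∀ v ∈ 𝒱, ∃ w, IsLeast {u | u ∈ 𝒰 ∧ v ⊆ u} w) : GeC 𝒱 𝒰 := by
  refine geC_of_map (fun v => ⋂₀ {u | u ∈ 𝒰 ∧ v ⊆ u}) (fun v hv => ⟨?_, ?_⟩)
    fun v _ v' _ hvv' => Set.sInter_subset_sInter fun u hu => ⟨hu.1, hvv'.trans hu.2⟩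
  · obtain ⟨w, hw⟩ := h v hv
    rw [← Set.sInf_eq_sInter, hw.csInf_eq]
    exact hw.1.1
  · exact Set.subset_sInter fun u hu => hu.2

lemma IsBasisLikeCover.exists_isLeast {X : Type*} [TopologicalSpace X] {𝒰 : Set (Set X)}
    (h : IsBasisLikeCover 𝒰) (x : X) : ∃ w, IsLeast {u | u ∈ 𝒰 ∧ x ∈ u} w := by
  obtain ⟨hfin, -, hcov, hbasis⟩ := h
  have hne : {u | u ∈ 𝒰 ∧ x ∈ u}.Nonempty := by
    obtain ⟨u, hu, hxu⟩ := Set.mem_sUnion.1 (hcov ▸ Set.mem_univ x)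
    exact ⟨u, hu, hxu⟩
  obtain ⟨w, hw⟩ := (hfin.subset fun _ hu => hu.1).exists_minimal hne
  refine ⟨w, hw.prop, fun u ⟨hu, hxu⟩ => ?_⟩
  obtain ⟨w', hw', hxw', hw'uw⟩ := hbasis u hu w hw.prop.1 x ⟨hxu, hw.prop.2⟩
  exact (hw.le_of_le ⟨hw', hxw'⟩ (hw'uw.trans Set.inter_subset_right)).trans
    (hw'uw.trans Set.inter_subset_left)

lemma mem_minNhd {X : Type*} [TopologicalSpace X] (x : X) : x ∈ minNhd x :=
  Set.mem_sInter.2 fun _ hU => hU.2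

lemma minNhd_subset_iff {X : Type*} [TopologicalSpace X] {x : X} {U : Set X}
    (hU : IsOpen U) : minNhd x ⊆ U ↔ x ∈ U :=
  ⟨fun h => h (mem_minNhd x), fun hx => Set.sInter_subset_of_mem ⟨hU, hx⟩⟩

lemma isOpen_minNhd {X : Type*} [TopologicalSpace X] [Finite X] (x : X) :
    IsOpen (minNhd x) :=
  (Set.toFinite _).isOpen_sInter fun _ h => h.1

lemma isBasisLikeCover_range_minNhd (X : Type*) [TopologicalSpace X] [Finite X] :
    IsBasisLikeCover (Set.range fun x : X => minNhd x) := by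
  refine ⟨Set.finite_range _, ?_, ?_, ?_⟩
  · rintro _ ⟨x, rfl⟩
    exact isOpen_minNhd x
  · exact Set.eq_univ_of_forall fun x => ⟨minNhd x, ⟨x, rfl⟩, mem_minNhd x⟩
  · rintro _ ⟨y, rfl⟩ _ ⟨z, rfl⟩ x ⟨hxy, hxz⟩
    exact ⟨minNhd x, ⟨x, rfl⟩, mem_minNhd x, Set.subset_inter
      ((minNhd_subset_iff (isOpen_minNhd y)).2 hxy) ((minNhd_subset_iff (isOpen_minNhd z)).2 hxz)⟩

lemma IsBasisLikeCover.range_minNhd_geC {X : Type*} [TopologicalSpace X] {𝒰 : Set (Set X)}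
    (h : IsBasisLikeCover 𝒰) : GeC (Set.range fun x : X => minNhd x) 𝒰 := by
  refine geC_of_forall_exists_isLeast ?_
  rintro _ ⟨x, rfl⟩
  have hsupersets : {u | u ∈ 𝒰 ∧ minNhd x ⊆ u} = {u | u ∈ 𝒰 ∧ x ∈ u} :=
    Set.ext fun u => and_congr_right fun hu => minNhd_subset_iff (h.2.1 u hu)
  rw [hsupersets]
  exact h.exists_isLeast x

/-- For a finite topological space `X`, the set of basis-like open covers ordered by
`≥_C` is a directed set: `≥_C` is reflexive and transitive, any two covers have a
common upper bound, and in fact `B(X) = {minNhd x | x ∈ X}` satisfies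
`B(X) ≥_C 𝒰` for every basis-like open cover `𝒰`. -/
theorem covers_directed_finite (X : Type*) [TopologicalSpace X] [Finite X] :
    (∀ 𝒰 : Set (Set X), IsBasisLikeCover 𝒰 → GeC 𝒰 𝒰) ∧
    (∀ 𝒰 𝒱 𝒲 : Set (Set X), IsBasisLikeCover 𝒰 → IsBasisLikeCover 𝒱 →
      IsBasisLikeCover 𝒲 → GeC 𝒰 𝒱 → GeC 𝒱 𝒲 → GeC 𝒰 𝒲) ∧
    (∀ 𝒰 𝒱 : Set (Set X), IsBasisLikeCover 𝒰 → IsBasisLikeCover 𝒱 →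
      ∃ 𝒲 : Set (Set X), IsBasisLikeCover 𝒲 ∧ GeC 𝒲 𝒰 ∧ GeC 𝒲 𝒱) ∧
    (∀ 𝒰 : Set (Set X), IsBasisLikeCover 𝒰 →
      GeC (Set.range fun x : X => minNhd x) 𝒰) :=
  ⟨fun 𝒰 _ => GeC.refl 𝒰,
    fun _ _ _ _ _ _ h₁ h₂ => h₁.trans h₂,
    fun _ _ h𝒰 h𝒱 => ⟨_, isBasisLikeCover_range_minNhd X, h𝒰.range_minNhd_geC,
      h𝒱.range_minNhd_geC⟩,
    fun _ h => h.range_minNhd_geC⟩
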